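/- Let G and H be graphs, S = {x, y, z} ⊆ V(G □ H) with x ∈ H(u₁), y ∈ H(u₂), z ∈ H(u₃) for distinct vertices u₁, u₂, u₃ of G. Let T₁, T₂ be two internally disjoint minimum pendant Steiner trees connecting {u₁,u₂,u₃} in G, and let T₁', T₂' be two internally disjoint pendant Steiner trees in H connecting {x, y', z'}, where y', z' are the projections of y, z to H(u₁). Then the subgraph (T₁ ∪ T₂) □ (T₁' ∪ T₂') of G □ H contains at least 3 pairwise internally disjoint pendant S-Steiner trees. -/

import Mathlib

open SimpleGraph

/-- `T` is a pendant `S`-Steiner tree in `G`: a subtree of `G` containing `S` in which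
every vertex of `S` has degree exactly one. -/
def IsPendantSteinerTree {V : Type*} (G : SimpleGraph V) (S : Set V) (T : G.Subgraph) : Prop :=
  T.coe.IsTree ∧ S ⊆ T.verts ∧ ∀ v ∈ S, (T.neighborSet v).ncard = 1

/-- Two (pendant) `S`-Steiner trees are internally disjoint: edge-disjoint with
vertex intersection exactly `S`. -/
def InternallyDisjoint {V : Type*} (G : SimpleGraph V) (S : Set V) (T T' : G.Subgraph) : Prop :=
  T.edgeSet ∩ T'.edgeSet = ∅ ∧ T.verts ∩ T'.verts = S

/-- There exist `ℓ` pairwise internally disjoint pendant `S`-Steiner trees in `G`. -/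
def HasPendantTrees {V : Type*} (G : SimpleGraph V) (S : Set V) (ℓ : ℕ) : Prop :=
  ∃ T : Fin ℓ → G.Subgraph, (∀ i, IsPendantSteinerTree G S (T i)) ∧
    ∀ i j, i ≠ j → InternallyDisjoint G S (T i) (T j)

/-- The pendant tree `k`-connectivity `τ_k(G)`: the largest `ℓ` such that every `k`-set of
vertices admits `ℓ` pairwise internally disjoint pendant Steiner trees. -/
noncomputable def pendantConn {V : Type*} (G : SimpleGraph V) (k : ℕ) : ℕ :=
  sSup {ℓ | ∀ S : Finset V, S.card = k → HasPendantTrees G (↑S) ℓ}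

/-- The minimum degree of a graph, via neighbour sets. -/
noncomputable def minDeg {V : Type*} (G : SimpleGraph V) : ℕ :=
  sInf (Set.range fun v => (G.neighborSet v).ncard)

/-- `G` is `k`-connected. -/
def IsKConnected {V : Type*} [Fintype V] (G : SimpleGraph V) (k : ℕ) : Prop :=
  k < Fintype.card V ∧
    ∀ U : Finset V, U.card < k → (G.induce ((↑U : Set V)ᶜ)).Connected

/-- The vertex connectivity `κ(G)`. -/
noncomputable def vertexConn {V : Type*} [Fintype V] (G : SimpleGraph V) : ℕ :=
  sSup {k | IsKConnected G k}

/-- The box product of a subgraph of `G` and a subgraph of `H`, as a subgraph of `G □ H`. -/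
def subgraphBox {α β : Type*} {G : SimpleGraph α} {H : SimpleGraph β}
    (A : G.Subgraph) (B : H.Subgraph) : (G □ H).Subgraph where
  verts := A.verts ×ˢ B.verts
  Adj x y := (A.Adj x.1 y.1 ∧ x.2 = y.2 ∧ x.2 ∈ B.verts) ∨
    (B.Adj x.2 y.2 ∧ x.1 = y.1 ∧ x.1 ∈ A.verts)
  adj_sub := by
    rintro x y (⟨h, h2, -⟩ | ⟨h, h2, -⟩)
    · exact Or.inl ⟨A.adj_sub h, h2⟩
    · exact Or.inr ⟨B.adj_sub h, h2⟩
  edge_vert := by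
    rintro x y (⟨h, h2, hb⟩ | ⟨h, h2, ha⟩)
    · exact ⟨A.edge_vert h, hb⟩
    · exact ⟨ha, B.edge_vert h⟩
  symm := by
    constructor
    rintro x y (⟨h, h2, hb⟩ | ⟨h, h2, ha⟩)
    · exact Or.inl ⟨A.adj_symm h, h2.symm, h2 ▸ hb⟩
    · exact Or.inr ⟨B.adj_symm h, h2.symm, h2 ▸ ha⟩


/-!
The three trees are assembled from copies of `T₁, T₂` in layers `α × {k}` and of `T₁', T₂'` in
fibers `{u} × V`, joined by paths inside these trees. The basic shape is a comb: a copy of a tree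
in one layer, with a path hanging from each terminal in its fiber. Two trees meeting in a single
vertex glue to a tree, and a path inside a pendant Steiner tree avoids all terminals other than
its ends; this keeps every pairwise intersection inside the terminal set.

If `a, b, c` are distinct, the trees are `T₁` in the layer of `a` with `T₁'`-paths to `b` and
`c`; `T₁'` in the fiber of `u₁` with `T₁`-paths to `u₂` and `u₃`; and `T₂` in the layer of a
non-terminal vertex `d` of `T₂'`, with `T₂'`-paths from `d` to `a, b, c`. The last one lies in
`T₂ □ T₂'`, which meets `T₁ □ T₁'` only in `{u₁, u₂, u₃} × {a, b, c}`. If `a = b ≠ c`, they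
are a comb over `T₁` in the layer of `a` with a `T₁'`-path to `c`, a comb over `T₂` in the layer
of a non-terminal vertex of `T₂'`, and the `T₂`-path from `u₁` to `u₂` in the layer of `a`, joined
at one of its inner vertices by a `T₁'`-path to the layer of `c` and continued there by a
`T₂`-path to `u₃`. If `a = b = c`, the trees are `T₁` and `T₂` in the layer of `a`, and a comb
over `T₁` in the layer of a neighbour of `a` in `T₁'`.
-/

namespace SimpleGraph

variable {V W : Type*} {G : SimpleGraph V}

namespace Subgraph

theorem neighborSet_eq_empty_of_notMem {A : G.Subgraph} {v : V} (hv : v ∉ A.verts) :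
    A.neighborSet v = ∅ :=
  Set.eq_empty_of_forall_notMem fun _ hw => hv (A.edge_vert hw)

theorem neighborSet_map_embedding {A : G.Subgraph} {G' : SimpleGraph W} (f : G ↪g G') (v : V) :
    (A.map f.toHom).neighborSet (f v) = f '' A.neighborSet v := by
  ext w
  simp [Relation.Map, f.injective.eq_iff]

theorem disjoint_edgeSet_iff {A B : G.Subgraph} :
    Disjoint A.edgeSet B.edgeSet ↔ ∀ ⦃x y⦄, A.Adj x y → ¬B.Adj x y := by
  simp [Set.disjoint_left, Sym2.forall]

theorem Connected.exists_isPath_toSubgraph_le {T : G.Subgraph} (hT : T.Connected) {u v : V}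
    (hu : u ∈ T.verts) (hv : v ∈ T.verts) : ∃ p : G.Walk u v, p.IsPath ∧ p.toSubgraph ≤ T := by
  classical
  obtain ⟨p, hp⟩ := (T.preconnected_iff_forall_exists_walk_subgraph.mp hT.preconnected) hu hv
  exact ⟨p.bypass, p.bypass_isPath, Walk.toSubgraph_bypass_le_toSubgraph.trans hp⟩

theorem isAcyclic_coe_iff {A : G.Subgraph} :
    A.coe.IsAcyclic ↔
      ∀ ⦃v w⦄, A.Adj v w → ∀ p : G.Walk v w, p.toSubgraph ≤ A → s(v, w) ∈ p.edges := by
  refine ⟨fun hA v w hvw p hp => ?_, fun h => ?_⟩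
  · let q := p.mapToSubgraph.map (inclusion hp)
    have hq : q.map A.hom = p := by
      simp only [q, Walk.map_map]
      exact p.map_mapToSubgraph_hom
    have hvw' : A.coe.Adj ⟨v, A.edge_vert hvw⟩ ⟨w, A.edge_vert hvw.symm⟩ := hvw
    have hmem := isBridge_iff_forall_walk_mem_edges.mp
      (isAcyclic_iff_forall_adj_isBridge.mp hA hvw') q
    have hmem' : s(v, w) ∈ q.edges.map (Sym2.map A.hom) := List.mem_map_of_mem hmem
    rw [← Walk.edges_map] at hmem'
    exact hq ▸ hmem'
  · refine isAcyclic_iff_forall_adj_isBridge.mpr fun v w hvw => ?_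
    refine isBridge_iff_forall_walk_mem_edges.mpr fun q => ?_
    have hle : (q.map A.hom).toSubgraph ≤ A := by
      rw [Walk.toSubgraph_map]
      exact (map_mono le_top).trans (map_hom_top A).le
    obtain ⟨e, he, hew⟩ := List.mem_map.mp (Walk.edges_map A.hom q ▸ h hvw (q.map A.hom) hle)
    have : e = s(v, w) := Sym2.map.injective Subtype.val_injective
      (hew : Sym2.map Subtype.val e = Sym2.map Subtype.val s(v, w))
    exact this ▸ he

/-- A walk in `A ⊔ B` can leave `A` only through the common vertex `x`, so its excursions
into `B` can be cut out. -/
theorem exists_walk_le_of_toSubgraph_le_sup {A B : G.Subgraph} {x : V}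
    (hAB : A.verts ∩ B.verts ⊆ {x}) {u v : V} (p : G.Walk u v) (hp : p.toSubgraph ≤ A ⊔ B)
    (hu : u ∈ A.verts) (hv : v ∈ A.verts) :
    ∃ q : G.Walk u v, q.toSubgraph ≤ A ∧ q.edges ⊆ p.edges := by
  suffices ∀ {u} (p : G.Walk u v), p.toSubgraph ≤ A ⊔ B →
      (u ∈ A.verts → ∃ q : G.Walk u v, q.toSubgraph ≤ A ∧ q.edges ⊆ p.edges) ∧
      (u ∈ B.verts → ∃ q : G.Walk x v, q.toSubgraph ≤ A ∧ q.edges ⊆ p.edges) from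
    (this p hp).1 hu
  have eq_x {y} (hA : y ∈ A.verts) (hB : y ∈ B.verts) : y = x := hAB ⟨hA, hB⟩
  clear hu hp p
  intro u p hp
  induction p with
  | nil =>
    have hnil : ∃ q : G.Walk _ _, q.toSubgraph ≤ A ∧ q.edges ⊆ [] :=
      ⟨.nil, by simpa using hv, by simp⟩
    exact ⟨fun _ => hnil, fun hB => eq_x hv hB ▸ hnil⟩
  | @cons u b v hub p ih =>
    simp only [Walk.toSubgraph, sup_le_iff, subgraphOfAdj_le_iff] at hp
    obtain ⟨ihA, ihB⟩ := ih hv hp.2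
    rcases hp.1 with hA | hB
    · obtain ⟨q, hqA, hqp⟩ := ihA (A.edge_vert hA.symm)
      have hq : ∃ q : G.Walk u v, q.toSubgraph ≤ A ∧ q.edges ⊆ (Walk.cons hub p).edges :=
        ⟨.cons hub q, by simpa [Walk.toSubgraph, subgraphOfAdj_le_iff] using ⟨hA, hqA⟩,
          by simpa using List.cons_subset_cons _ hqp⟩
      exact ⟨fun _ => hq, fun hB => eq_x (A.edge_vert hA) hB ▸ hq⟩
    · obtain ⟨q, hqA, hqp⟩ := ihB (B.edge_vert hB.symm)
      have hq : ∃ q : G.Walk x v, q.toSubgraph ≤ A ∧ q.edges ⊆ (Walk.cons hub p).edges :=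
        ⟨q, hqA, List.Subset.trans hqp (by simp)⟩
      exact ⟨fun hA => (eq_x hA (B.edge_vert hB)).symm ▸ hq, fun _ => hq⟩

theorem isTree_coe_sup {A B : G.Subgraph} {x : V} (hA : A.coe.IsTree) (hB : B.coe.IsTree)
    (hAB : A.verts ∩ B.verts = {x}) : (A ⊔ B).coe.IsTree := by
  refine ⟨Subgraph.connected_iff'.mp (connected_sup
    (Subgraph.connected_iff'.mpr hA.connected).preconnected
    (Subgraph.connected_iff'.mpr hB.connected).preconnected (by simp [hAB])), ?_⟩
  have bridge {A B : G.Subgraph} (hA : A.coe.IsAcyclic) (hAB : A.verts ∩ B.verts ⊆ {x})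
      {v w} (hvw : A.Adj v w) (p : G.Walk v w) (hp : p.toSubgraph ≤ A ⊔ B) :
      s(v, w) ∈ p.edges := by
    obtain ⟨q, hqA, hqp⟩ := exists_walk_le_of_toSubgraph_le_sup hAB p hp (A.edge_vert hvw)
      (A.edge_vert hvw.symm)
    exact hqp (isAcyclic_coe_iff.mp hA hvw q hqA)
  refine isAcyclic_coe_iff.mpr fun v w hvw p hp => ?_
  rcases hvw with hvw | hvw
  · exact bridge hA.isAcyclic hAB.subset hvw p hp
  · exact bridge hB.isAcyclic (Set.inter_comm _ _ ▸ hAB.subset) hvw p (sup_comm A B ▸ hp)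

end Subgraph

namespace Walk

variable {u v : V} {p : G.Walk u v}

theorem IsPath.isTree_coe_toSubgraph (hp : p.IsPath) : p.toSubgraph.coe.IsTree := by
  induction p with
  | nil => exact IsTree.coe_singletonSubgraph G _
  | @cons u b v hub p ih =>
    rw [cons_isPath_iff] at hp
    refine Subgraph.isTree_coe_sup (IsTree.coe_subgraphOfAdj hub) (ih hp.1) (x := b) ?_
    ext z
    simp only [subgraphOfAdj_verts, verts_toSubgraph, Set.mem_inter_iff, Set.mem_insert_iff,
      Set.mem_singleton_iff, Set.mem_ofPred_eq]
    constructor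
    · rintro ⟨rfl | rfl, hz⟩
      exacts [absurd hz hp.2, rfl]
    · rintro rfl
      exact ⟨Or.inr rfl, p.start_mem_support⟩

theorem IsPath.isPendantSteinerTree_toSubgraph (hp : p.IsPath) (huv : u ≠ v) :
    IsPendantSteinerTree G {u, v} p.toSubgraph := by
  have hnil := p.not_nil_of_ne huv
  refine ⟨hp.isTree_coe_toSubgraph, by simp [Set.insert_subset_iff], ?_⟩
  rintro z (rfl | rfl)
  · simp [hp.neighborSet_toSubgraph_startpoint hnil]
  · simp [hp.neighborSet_toSubgraph_endpoint hnil]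

theorem IsPath.notMem_support_of_ncard_neighborSet_eq_one {T : G.Subgraph} {z : V}
    (hp : p.IsPath) (hpT : p.toSubgraph ≤ T) (hz : (T.neighborSet z).ncard = 1)
    (hzu : z ≠ u) (hzv : z ≠ v) : z ∉ p.support := by
  intro hmem
  obtain ⟨i, rfl, hi⟩ := mem_support_iff_exists_getVert.mp hmem
  have hi0 : i ≠ 0 := by rintro rfl; exact hzu p.getVert_zero
  have hil : i < p.length := lt_of_le_of_ne hi (by rintro rfl; exact hzv p.getVert_length)
  have h2 := hp.ncard_neighborSet_toSubgraph_internal_eq_two hi0 hil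
  have := Set.ncard_le_ncard (Subgraph.neighborSet_subset_of_subgraph hpT _)
    (Set.finite_of_ncard_pos (hz ▸ Nat.one_pos))
  omega

end Walk

end SimpleGraph

section PendantSteinerTree

variable {V W : Type*} {G : SimpleGraph V} {S S' : Set V} {T A B : G.Subgraph}

namespace IsPendantSteinerTree

theorem mono (hT : IsPendantSteinerTree G S T) (h : S' ⊆ S) : IsPendantSteinerTree G S' T :=
  ⟨hT.1, h.trans hT.2.1, fun v hv => hT.2.2 v (h hv)⟩

theorem sup {x : V} (hA : IsPendantSteinerTree G S A) (hB : IsPendantSteinerTree G S' B)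
    (hAB : A.verts ∩ B.verts = {x}) (hxS : x ∉ S) (hxS' : x ∉ S') :
    IsPendantSteinerTree G (S ∪ S') (A ⊔ B) := by
  refine ⟨Subgraph.isTree_coe_sup hA.1 hB.1 hAB, Set.union_subset_union hA.2.1 hB.2.1, ?_⟩
  have only_in {C D : G.Subgraph} {v} (hv : v ∈ C.verts) (hvx : v ≠ x)
      (hCD : C.verts ∩ D.verts = {x}) : D.neighborSet v = ∅ :=
    Subgraph.neighborSet_eq_empty_of_notMem fun hvD => hvx (hCD.subset ⟨hv, hvD⟩)
  rintro v (hv | hv)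
  · rw [Subgraph.neighborSet_sup, only_in (hA.2.1 hv) (ne_of_mem_of_not_mem hv hxS) hAB,
      Set.union_empty, hA.2.2 v hv]
  · rw [Subgraph.neighborSet_sup, only_in (hB.2.1 hv) (ne_of_mem_of_not_mem hv hxS')
      (Set.inter_comm _ _ ▸ hAB), Set.empty_union, hB.2.2 v hv]

theorem map {G' : SimpleGraph W} (f : G ↪g G') (hT : IsPendantSteinerTree G S T) :
    IsPendantSteinerTree G' (f '' S) (T.map f.toHom) := by
  refine ⟨(f.toCopy.isoSubgraphMap T).isTree_iff.mp hT.1, Set.image_mono hT.2.1, ?_⟩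
  rintro _ ⟨v, hv, rfl⟩
  rw [Subgraph.neighborSet_map_embedding, Set.ncard_image_of_injective _ f.injective,
    hT.2.2 v hv]

theorem exists_adj (hT : IsPendantSteinerTree G S T) {x : V} (hx : x ∈ S) : ∃ y, T.Adj x y := by
  obtain ⟨y, hy⟩ := Set.ncard_eq_one.mp (hT.2.2 x hx)
  exact ⟨y, (hy.symm ▸ Set.mem_singleton y : y ∈ T.neighborSet x)⟩

theorem eq_of_adj (hT : IsPendantSteinerTree G S T) {x y y' : V} (hx : x ∈ S) (hy : T.Adj x y)
    (hy' : T.Adj x y') : y = y' := by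
  obtain ⟨d, hd⟩ := Set.ncard_eq_one.mp (hT.2.2 x hx)
  have hy : y ∈ T.neighborSet x := hy
  have hy' : y' ∈ T.neighborSet x := hy'
  rw [hd] at hy hy'
  exact hy.trans hy'.symm

theorem exists_isPath (hT : IsPendantSteinerTree G S T) {x y : V} (hx : x ∈ T.verts)
    (hy : y ∈ T.verts) :
    ∃ p : G.Walk x y, p.IsPath ∧ p.toSubgraph ≤ T ∧ ∀ z ∈ S, z ≠ x → z ≠ y → z ∉ p.support := by
  obtain ⟨p, hp, hpT⟩ :=
    (Subgraph.connected_iff'.mpr hT.1.connected).exists_isPath_toSubgraph_le hx hy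
  exact ⟨p, hp, hpT, fun z hz =>
    hp.notMem_support_of_ncard_neighborSet_eq_one hpT (hT.2.2 z hz)⟩

/-- The unique neighbour of `x` would be the second vertex of the path from `x` to `z`,
which avoids the terminal `y`. -/
theorem not_adj (hT : IsPendantSteinerTree G S T) {x y z : V} (hx : x ∈ S) (hy : y ∈ S)
    (hz : z ∈ S) (hzx : z ≠ x) (hzy : z ≠ y) : ¬T.Adj x y := by
  intro hxy
  obtain ⟨p, hp, hpT, hpS⟩ := hT.exists_isPath (hT.2.1 hx) (hT.2.1 hz)
  have hnil : ¬p.Nil := p.not_nil_of_ne hzx.symm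
  have hadj := p.toSubgraph_adj_snd hnil
  have hsnd : p.snd = y := (hT.eq_of_adj hx hxy (hpT.2 hadj)).symm
  exact hpS y hy hxy.ne.symm hzy.symm (hsnd ▸ p.mem_verts_toSubgraph.mp hadj.snd_mem)

theorem snd_notMem {x y z : V} (hT : IsPendantSteinerTree G {x, y, z} T) (hxy : x ≠ y)
    (hxz : x ≠ z) (hyz : y ≠ z) {p : G.Walk x y} (hp : p.IsPath) (hpT : p.toSubgraph ≤ T) :
    p.snd ∉ ({x, y, z} : Set V) := by
  have hadj := p.toSubgraph_adj_snd (p.not_nil_of_ne hxy)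
  have hsnd := p.mem_verts_toSubgraph.mp hadj.snd_mem
  simp only [Set.mem_insert_iff, Set.mem_singleton_iff, not_or]
  refine ⟨hadj.ne.symm, fun h => ?_, fun h => ?_⟩
  · exact hT.not_adj (z := z) (by simp) (by simp) (by simp) hxz.symm hyz.symm (h ▸ hpT.2 hadj)
  · exact hp.notMem_support_of_ncard_neighborSet_eq_one hpT (hT.2.2 z (by simp)) hxz.symm
      hyz.symm (h ▸ hsnd)

end IsPendantSteinerTree

theorem InternallyDisjoint.symm {T T' : G.Subgraph} (h : InternallyDisjoint G S T T') :
    InternallyDisjoint G S T' T :=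
  ⟨Set.inter_comm T'.edgeSet _ ▸ h.1, Set.inter_comm T'.verts _ ▸ h.2⟩

theorem internallyDisjoint_of_subset {T T' : G.Subgraph} (hT : S ⊆ T.verts) (hT' : S ⊆ T'.verts)
    (hE : Disjoint T.edgeSet T'.edgeSet) (hV : T.verts ∩ T'.verts ⊆ S) :
    InternallyDisjoint G S T T' :=
  ⟨Set.disjoint_iff_inter_eq_empty.mp hE, hV.antisymm (Set.subset_inter hT hT')⟩

def HasPendantTreesIn (G : SimpleGraph V) (S : Set V) (ℓ : ℕ) (M : G.Subgraph) : Prop :=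
  ∃ W : Fin ℓ → G.Subgraph, (∀ i, W i ≤ M) ∧ (∀ i, IsPendantSteinerTree G S (W i)) ∧
    ∀ i j, i ≠ j → InternallyDisjoint G S (W i) (W j)

theorem HasPendantTreesIn.mono {ℓ : ℕ} {M M' : G.Subgraph} (h : HasPendantTreesIn G S ℓ M)
    (hM : M ≤ M') : HasPendantTreesIn G S ℓ M' :=
  let ⟨W, hWM, hW⟩ := h
  ⟨W, fun i => (hWM i).trans hM, hW⟩

theorem hasPendantTreesIn_three {M W₁ W₂ W₃ : G.Subgraph} (hM : W₁ ≤ M ∧ W₂ ≤ M ∧ W₃ ≤ M)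
    (h₁ : IsPendantSteinerTree G S W₁) (h₂ : IsPendantSteinerTree G S W₂)
    (h₃ : IsPendantSteinerTree G S W₃) (h₁₂ : InternallyDisjoint G S W₁ W₂)
    (h₁₃ : InternallyDisjoint G S W₁ W₃) (h₂₃ : InternallyDisjoint G S W₂ W₃) :
    HasPendantTreesIn G S 3 M := by
  refine ⟨![W₁, W₂, W₃], ?_, ?_, ?_⟩
  · intro i; fin_cases i <;> simp [hM]
  · intro i; fin_cases i <;> assumption
  · intro i j hij
    fin_cases i <;> fin_cases j <;>
      first | exact absurd rfl hij | assumption | exact InternallyDisjoint.symm ‹_›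

end PendantSteinerTree

section BoxProduct

variable {α β : Type*} {G : SimpleGraph α} {H : SimpleGraph β}

def layerCopy (H : SimpleGraph β) (A : G.Subgraph) (b : β) : (G □ H).Subgraph :=
  A.map (boxProdLeft G H b).toHom

def fiberCopy (G : SimpleGraph α) (a : α) (B : H.Subgraph) : (G □ H).Subgraph :=
  B.map (boxProdRight G H a).toHom

@[simp] theorem verts_layerCopy (A : G.Subgraph) (b : β) :
    (layerCopy H A b).verts = A.verts ×ˢ {b} := by
  simp [layerCopy, Set.prod_singleton]

@[simp] theorem verts_fiberCopy (a : α) (B : H.Subgraph) :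
    (fiberCopy G a B).verts = {a} ×ˢ B.verts := by
  simp [fiberCopy, Set.singleton_prod]

@[simp] theorem layerCopy_adj {A : G.Subgraph} {b : β} {x y : α × β} :
    (layerCopy H A b).Adj x y ↔ A.Adj x.1 y.1 ∧ x.2 = b ∧ y.2 = b := by
  obtain ⟨x₁, x₂⟩ := x; obtain ⟨y₁, y₂⟩ := y
  simp [layerCopy, Relation.Map, eq_comm]

@[simp] theorem fiberCopy_adj {a : α} {B : H.Subgraph} {x y : α × β} :
    (fiberCopy G a B).Adj x y ↔ B.Adj x.2 y.2 ∧ x.1 = a ∧ y.1 = a := by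
  obtain ⟨x₁, x₂⟩ := x; obtain ⟨y₁, y₂⟩ := y
  simp [fiberCopy, Relation.Map, eq_comm]

theorem IsPendantSteinerTree.layerCopy {S : Set α} {A : G.Subgraph}
    (hA : IsPendantSteinerTree G S A) (b : β) :
    IsPendantSteinerTree (G □ H) (S ×ˢ {b}) (layerCopy H A b) := by
  simpa [Set.prod_singleton, _root_.layerCopy] using hA.map (boxProdLeft G H b)

theorem IsPendantSteinerTree.fiberCopy {S : Set β} {B : H.Subgraph}
    (hB : IsPendantSteinerTree H S B) (a : α) :
    IsPendantSteinerTree (G □ H) ({a} ×ˢ S) (fiberCopy G a B) := by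
  simpa [Set.singleton_prod, _root_.fiberCopy] using hB.map (boxProdRight G H a)

theorem ncard_neighborSet_layerCopy (A : G.Subgraph) (a : α) (b : β) :
    ((layerCopy H A b).neighborSet (a, b)).ncard = (A.neighborSet a).ncard := by
  rw [layerCopy, show (a, b) = boxProdLeft G H b a from rfl, Subgraph.neighborSet_map_embedding,
    Set.ncard_image_of_injective _ (boxProdLeft G H b).injective]

theorem ncard_neighborSet_fiberCopy (a : α) (B : H.Subgraph) (b : β) :
    ((fiberCopy G a B).neighborSet (a, b)).ncard = (B.neighborSet b).ncard := by
  rw [fiberCopy, show (a, b) = boxProdRight G H a b from rfl, Subgraph.neighborSet_map_embedding,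
    Set.ncard_image_of_injective _ (boxProdRight G H a).injective]

theorem neighborSet_layerCopy_of_ne (A : G.Subgraph) {b k : β} (a : α) (hk : k ≠ b) :
    (layerCopy H A b).neighborSet (a, k) = ∅ :=
  Subgraph.neighborSet_eq_empty_of_notMem (by simp [hk])

theorem neighborSet_fiberCopy_of_ne {a x : α} (B : H.Subgraph) (b : β) (hx : x ≠ a) :
    (fiberCopy G a B).neighborSet (x, b) = ∅ :=
  Subgraph.neighborSet_eq_empty_of_notMem (by simp [hx])

theorem isTree_coe_layerCopy {A : G.Subgraph} (hA : A.coe.IsTree) (b : β) :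
    (layerCopy H A b).coe.IsTree :=
  ((boxProdLeft G H b).toCopy.isoSubgraphMap A).isTree_iff.mp hA

theorem isTree_coe_fiberCopy {B : H.Subgraph} (hB : B.coe.IsTree) (a : α) :
    (fiberCopy G a B).coe.IsTree :=
  ((boxProdRight G H a).toCopy.isoSubgraphMap B).isTree_iff.mp hB

theorem map_boxProdComm_layerCopy (A : G.Subgraph) (b : β) :
    (layerCopy H A b).map (boxProdComm G H).toHom = fiberCopy H b A := by
  rw [layerCopy, fiberCopy, ← Subgraph.map_comp]
  rfl

theorem map_boxProdComm_fiberCopy (a : α) (B : H.Subgraph) :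
    (fiberCopy G a B).map (boxProdComm G H).toHom = layerCopy G B a := by
  rw [layerCopy, fiberCopy, ← Subgraph.map_comp]
  rfl

theorem layerCopy_le_subgraphBox {A A' : G.Subgraph} {B' : H.Subgraph} {b : β} (hA : A ≤ A')
    (hb : b ∈ B'.verts) : layerCopy H A b ≤ subgraphBox A' B' := by
  refine ⟨?_, fun x y hxy => ?_⟩
  · simpa [subgraphBox] using Set.prod_mono hA.1 (Set.singleton_subset_iff.mpr hb)
  · obtain ⟨hxy, hx, hy⟩ := layerCopy_adj.mp hxy
    exact Or.inl ⟨hA.2 hxy, hx.trans hy.symm, hx ▸ hb⟩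

theorem fiberCopy_le_subgraphBox {A' : G.Subgraph} {B B' : H.Subgraph} {a : α} (hB : B ≤ B')
    (ha : a ∈ A'.verts) : fiberCopy G a B ≤ subgraphBox A' B' := by
  refine ⟨?_, fun x y hxy => ?_⟩
  · simpa [subgraphBox] using Set.prod_mono (Set.singleton_subset_iff.mpr ha) hB.1
  · obtain ⟨hxy, hx, hy⟩ := fiberCopy_adj.mp hxy
    exact Or.inr ⟨hB.2 hxy, hx.trans hy.symm, hx ▸ ha⟩

theorem subgraphBox_mono {A A' : G.Subgraph} {B B' : H.Subgraph} (hA : A ≤ A') (hB : B ≤ B') :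
    subgraphBox A B ≤ subgraphBox A' B' := by
  refine ⟨Set.prod_mono hA.1 hB.1, ?_⟩
  rintro x y (⟨hxy, h, hb⟩ | ⟨hxy, h, ha⟩)
  exacts [Or.inl ⟨hA.2 hxy, h, hB.1 hb⟩, Or.inr ⟨hB.2 hxy, h, hA.1 ha⟩]

@[simp] theorem disjoint_edgeSet_layerCopy_fiberCopy (A : G.Subgraph) (b : β) (a : α)
    (B : H.Subgraph) : Disjoint (layerCopy H A b).edgeSet (fiberCopy G a B).edgeSet := by
  rw [Subgraph.disjoint_edgeSet_iff]
  rintro ⟨x, k⟩ ⟨y, l⟩ h₁ h₂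
  simp only [layerCopy_adj, fiberCopy_adj] at h₁ h₂
  exact h₁.1.ne (h₂.2.1.trans h₂.2.2.symm)

@[simp] theorem disjoint_edgeSet_fiberCopy_layerCopy (a : α) (B : H.Subgraph) (A : G.Subgraph)
    (b : β) : Disjoint (fiberCopy G a B).edgeSet (layerCopy H A b).edgeSet :=
  (disjoint_edgeSet_layerCopy_fiberCopy A b a B).symm

@[simp] theorem disjoint_edgeSet_layerCopy_layerCopy {A A' : G.Subgraph} {b b' : β} :
    Disjoint (layerCopy H A b).edgeSet (layerCopy H A' b').edgeSet ↔
      b ≠ b' ∨ Disjoint A.edgeSet A'.edgeSet := by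
  simp only [Subgraph.disjoint_edgeSet_iff, layerCopy_adj, Prod.forall]
  constructor
  · intro h
    by_contra! ⟨rfl, x, y, hA, hA'⟩
    exact h x b y b ⟨hA, rfl, rfl⟩ ⟨hA', rfl, rfl⟩
  · rintro (hb | hAA') x k y l ⟨hA, rfl, rfl⟩ ⟨hA', hk, -⟩
    exacts [hb hk, hAA' hA hA']

@[simp] theorem disjoint_edgeSet_fiberCopy_fiberCopy {B B' : H.Subgraph} {a a' : α} :
    Disjoint (fiberCopy G a B).edgeSet (fiberCopy G a' B').edgeSet ↔
      a ≠ a' ∨ Disjoint B.edgeSet B'.edgeSet := by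
  simp only [Subgraph.disjoint_edgeSet_iff, fiberCopy_adj, Prod.forall]
  constructor
  · intro h
    by_contra! ⟨rfl, x, y, hB, hB'⟩
    exact h a x a y ⟨hB, rfl, rfl⟩ ⟨hB', rfl, rfl⟩
  · rintro (ha | hBB') x k y l ⟨hB, rfl, rfl⟩ ⟨hB', hk, -⟩
    exacts [ha hk, hBB' hB hB']

theorem internallyDisjoint_of_le_subgraphBox {S : Set (α × β)} {A A' : G.Subgraph}
    {B B' : H.Subgraph} (hA : Disjoint A.edgeSet A'.edgeSet) (hB : Disjoint B.edgeSet B'.edgeSet)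
    {W W' : (G □ H).Subgraph} (hW : W ≤ subgraphBox A B) (hW' : W' ≤ subgraphBox A' B')
    (hSW : S ⊆ W.verts) (hSW' : S ⊆ W'.verts) (hV : W'.verts ∩ A.verts ×ˢ B.verts ⊆ S) :
    InternallyDisjoint (G □ H) S W W' := by
  refine internallyDisjoint_of_subset hSW hSW' ((Subgraph.disjoint_edgeSet_iff.mpr ?_).mono
    (Subgraph.edgeSet_mono hW) (Subgraph.edgeSet_mono hW')) fun v hv => hV ⟨hv.2, hW.1 hv.1⟩
  rintro x y (⟨h, hxy, -⟩ | ⟨h, hxy, -⟩) (⟨h', -, -⟩ | ⟨h', hxy', -⟩)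
  · exact Subgraph.disjoint_edgeSet_iff.mp hA h h'
  · exact h.ne hxy'
  · exact h'.ne hxy
  · exact Subgraph.disjoint_edgeSet_iff.mp hB h h'

end BoxProduct

section Combs

variable {α β : Type*} {G : SimpleGraph α} {H : SimpleGraph β}

def layerComb (T : G.Subgraph) (b : β) (u₁ u₂ u₃ : α) {t₁ t₂ t₃ : β} (p₁ : H.Walk b t₁)
    (p₂ : H.Walk b t₂) (p₃ : H.Walk b t₃) : (G □ H).Subgraph :=
  layerCopy H T b ⊔ fiberCopy G u₁ p₁.toSubgraph ⊔ fiberCopy G u₂ p₂.toSubgraph ⊔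
    fiberCopy G u₃ p₃.toSubgraph

def fiberComb (U : H.Subgraph) (a : α) (b₁ b₂ b₃ : β) {s₁ s₂ s₃ : α} (p₁ : G.Walk a s₁)
    (p₂ : G.Walk a s₂) (p₃ : G.Walk a s₃) : (G □ H).Subgraph :=
  fiberCopy G a U ⊔ layerCopy H p₁.toSubgraph b₁ ⊔ layerCopy H p₂.toSubgraph b₂ ⊔
    layerCopy H p₃.toSubgraph b₃

@[simp] theorem mem_verts_layerComb {T : G.Subgraph} {b : β} {u₁ u₂ u₃ : α} {t₁ t₂ t₃ : β}
    {p₁ : H.Walk b t₁} {p₂ : H.Walk b t₂} {p₃ : H.Walk b t₃} {x : α} {k : β} :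
    (x, k) ∈ (layerComb T b u₁ u₂ u₃ p₁ p₂ p₃).verts ↔ x ∈ T.verts ∧ k = b ∨
      x = u₁ ∧ k ∈ p₁.support ∨ x = u₂ ∧ k ∈ p₂.support ∨ x = u₃ ∧ k ∈ p₃.support := by
  simp [layerComb, or_assoc]

@[simp] theorem mem_verts_fiberComb {U : H.Subgraph} {a : α} {b₁ b₂ b₃ : β} {s₁ s₂ s₃ : α}
    {p₁ : G.Walk a s₁} {p₂ : G.Walk a s₂} {p₃ : G.Walk a s₃} {x : α} {k : β} :
    (x, k) ∈ (fiberComb U a b₁ b₂ b₃ p₁ p₂ p₃).verts ↔ x = a ∧ k ∈ U.verts ∨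
      x ∈ p₁.support ∧ k = b₁ ∨ x ∈ p₂.support ∧ k = b₂ ∨ x ∈ p₃.support ∧ k = b₃ := by
  simp [fiberComb, or_assoc]

theorem ncard_neighborSet_layerCopy_union_fiberCopy {T : G.Subgraph} {u : α}
    (hu : (T.neighborSet u).ncard = 1) {b t : β} {p : H.Walk b t} (hp : p.IsPath) :
    ((layerCopy H T b).neighborSet (u, t) ∪ (fiberCopy G u p.toSubgraph).neighborSet (u, t)).ncard
      = 1 := by
  rcases eq_or_ne t b with rfl | htb
  · obtain rfl := (Walk.isPath_iff_nil.mp hp).eq_nil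
    have hleg : (fiberCopy G u (Walk.nil : H.Walk t t).toSubgraph).neighborSet (u, t) = ∅ := by
      ext; simp
    rwa [hleg, Set.union_empty, ncard_neighborSet_layerCopy]
  · rw [neighborSet_layerCopy_of_ne T u htb, Set.empty_union, ncard_neighborSet_fiberCopy,
      hp.neighborSet_toSubgraph_endpoint (p.not_nil_of_ne htb.symm), Set.ncard_singleton]

theorem isPendantSteinerTree_layerComb {T : G.Subgraph} {u₁ u₂ u₃ : α}
    (hT : IsPendantSteinerTree G {u₁, u₂, u₃} T) (h12 : u₁ ≠ u₂) (h13 : u₁ ≠ u₃) (h23 : u₂ ≠ u₃)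
    {b t₁ t₂ t₃ : β} {p₁ : H.Walk b t₁} {p₂ : H.Walk b t₂} {p₃ : H.Walk b t₃}
    (hp₁ : p₁.IsPath) (hp₂ : p₂.IsPath) (hp₃ : p₃.IsPath) :
    IsPendantSteinerTree (G □ H) {(u₁, t₁), (u₂, t₂), (u₃, t₃)}
      (layerComb T b u₁ u₂ u₃ p₁ p₂ p₃) := by
  obtain ⟨hu₁, hu₂, hu₃⟩ : u₁ ∈ T.verts ∧ u₂ ∈ T.verts ∧ u₃ ∈ T.verts := by
    simpa [Set.insert_subset_iff] using hT.2.1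
  have hb₁ := p₁.start_mem_support
  have hb₂ := p₂.start_mem_support
  have hb₃ := p₃.start_mem_support
  refine ⟨?_, by simp [layerComb, Set.insert_subset_iff], ?_⟩
  · refine Subgraph.isTree_coe_sup (x := (u₃, b)) (Subgraph.isTree_coe_sup (x := (u₂, b))
      (Subgraph.isTree_coe_sup (x := (u₁, b)) (isTree_coe_layerCopy hT.1 b)
        (isTree_coe_fiberCopy hp₁.isTree_coe_toSubgraph u₁) ?_)
      (isTree_coe_fiberCopy hp₂.isTree_coe_toSubgraph u₂) ?_)
      (isTree_coe_fiberCopy hp₃.isTree_coe_toSubgraph u₃) ?_ <;>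
    · ext ⟨x, k⟩
      simp only [Subgraph.verts_sup, verts_layerCopy, verts_fiberCopy, Set.mem_inter_iff,
        Set.mem_union, Set.mem_prod, Set.mem_singleton_iff, Walk.mem_verts_toSubgraph,
        Prod.mk.injEq]
      grind
  · rintro _ (rfl | rfl | rfl) <;>
      simp only [layerComb, Subgraph.neighborSet_sup, neighborSet_fiberCopy_of_ne, h12, h13, h23,
        h12.symm, h13.symm, h23.symm, Ne, not_false_eq_true, Set.union_empty] <;>
      exact ncard_neighborSet_layerCopy_union_fiberCopy (hT.2.2 _ (by simp)) (by assumption)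

theorem isPendantSteinerTree_fiberComb {U : H.Subgraph} {b₁ b₂ b₃ : β}
    (hU : IsPendantSteinerTree H {b₁, b₂, b₃} U) (h12 : b₁ ≠ b₂) (h13 : b₁ ≠ b₃) (h23 : b₂ ≠ b₃)
    {a s₁ s₂ s₃ : α} {p₁ : G.Walk a s₁} {p₂ : G.Walk a s₂} {p₃ : G.Walk a s₃}
    (hp₁ : p₁.IsPath) (hp₂ : p₂.IsPath) (hp₃ : p₃.IsPath) :
    IsPendantSteinerTree (G □ H) {(s₁, b₁), (s₂, b₂), (s₃, b₃)}
      (fiberComb U a b₁ b₂ b₃ p₁ p₂ p₃) := by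
  have h := (isPendantSteinerTree_layerComb (H := G) hU h12 h13 h23 hp₁ hp₂ hp₃).map
    (boxProdComm H G).toEmbedding
  simpa [layerComb, fiberComb, Subgraph.map_sup, Set.image_insert_eq, map_boxProdComm_layerCopy,
    map_boxProdComm_fiberCopy] using h

theorem layerComb_le_subgraphBox {T A : G.Subgraph} {B : H.Subgraph} {u₁ u₂ u₃ : α}
    (hTA : T ≤ A) (hu : {u₁, u₂, u₃} ⊆ T.verts) {b t₁ t₂ t₃ : β} {p₁ : H.Walk b t₁}
    {p₂ : H.Walk b t₂} {p₃ : H.Walk b t₃} (hp₁ : p₁.toSubgraph ≤ B) (hp₂ : p₂.toSubgraph ≤ B)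
    (hp₃ : p₃.toSubgraph ≤ B) : layerComb T b u₁ u₂ u₃ p₁ p₂ p₃ ≤ subgraphBox A B := by
  simp only [Set.insert_subset_iff, Set.singleton_subset_iff] at hu
  exact sup_le (sup_le (sup_le
    (layerCopy_le_subgraphBox hTA (hp₁.1 p₁.start_mem_verts_toSubgraph))
    (fiberCopy_le_subgraphBox hp₁ (hTA.1 hu.1)))
    (fiberCopy_le_subgraphBox hp₂ (hTA.1 hu.2.1))) (fiberCopy_le_subgraphBox hp₃ (hTA.1 hu.2.2))

theorem fiberComb_le_subgraphBox {U B : H.Subgraph} {A : G.Subgraph} {b₁ b₂ b₃ : β}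
    (hUB : U ≤ B) (hb : {b₁, b₂, b₃} ⊆ U.verts) {a s₁ s₂ s₃ : α} {p₁ : G.Walk a s₁}
    {p₂ : G.Walk a s₂} {p₃ : G.Walk a s₃} (hp₁ : p₁.toSubgraph ≤ A) (hp₂ : p₂.toSubgraph ≤ A)
    (hp₃ : p₃.toSubgraph ≤ A) : fiberComb U a b₁ b₂ b₃ p₁ p₂ p₃ ≤ subgraphBox A B := by
  simp only [Set.insert_subset_iff, Set.singleton_subset_iff] at hb
  exact sup_le (sup_le (sup_le
    (fiberCopy_le_subgraphBox hUB (hp₁.1 p₁.start_mem_verts_toSubgraph))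
    (layerCopy_le_subgraphBox hp₁ (hUB.1 hb.1)))
    (layerCopy_le_subgraphBox hp₂ (hUB.1 hb.2.1))) (layerCopy_le_subgraphBox hp₃ (hUB.1 hb.2.2))

theorem isPendantSteinerTree_layerCopy_sup_fiberCopy_sup_layerCopy {v₁ v₂ v₃ w : α}
    (h12 : v₁ ≠ v₂) {P : G.Walk v₁ v₂} {P' : G.Walk w v₃} (hP : P.IsPath) (hP' : P'.IsPath)
    (hw : w ∈ P.support) (hw₁ : w ≠ v₁) (hw₂ : w ≠ v₂) (hw₃ : w ≠ v₃) {p q : β} (hpq : p ≠ q)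
    {R : H.Walk p q} (hR : R.IsPath) :
    IsPendantSteinerTree (G □ H) {(v₁, p), (v₂, p), (v₃, q)}
      (layerCopy H P.toSubgraph p ⊔ fiberCopy G w R.toSubgraph ⊔ layerCopy H P'.toSubgraph q) := by
  have h := (((hP.isPendantSteinerTree_toSubgraph h12).layerCopy p).sup
    (((hR.isPendantSteinerTree_toSubgraph hpq).mono (Set.empty_subset _)).fiberCopy w)
    (x := (w, p)) ?_ (by simp [hw₁, hw₂]) (by simp)).sup
    (((hP'.isPendantSteinerTree_toSubgraph hw₃).mono (S' := {v₃}) (by simp)).layerCopy q)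
    (x := (w, q)) ?_ (by simp [hpq.symm]) (by simp [hw₃])
  · convert h using 1
    ext ⟨x, k⟩
    simp only [Set.mem_insert_iff, Set.mem_singleton_iff, Set.mem_union, Set.mem_prod,
      Prod.mk.injEq, Set.mem_empty_iff_false]
    tauto
  all_goals
    ext ⟨x, k⟩
    simp only [Subgraph.verts_sup, verts_layerCopy, verts_fiberCopy, Set.mem_inter_iff,
      Set.mem_union, Set.mem_prod, Set.mem_singleton_iff, Walk.mem_verts_toSubgraph,
      Prod.mk.injEq]
    grind [Walk.start_mem_support, Walk.end_mem_support]

end Combs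

section Cases

variable {α β : Type*} {G : SimpleGraph α} {H : SimpleGraph β}

theorem hasPendantTreesIn_of_singleton {u₁ u₂ u₃ : α} (h12 : u₁ ≠ u₂) (h13 : u₁ ≠ u₃)
    (h23 : u₂ ≠ u₃) {T₁ T₂ : G.Subgraph} (hT₁ : IsPendantSteinerTree G {u₁, u₂, u₃} T₁)
    (hT₂ : IsPendantSteinerTree G {u₁, u₂, u₃} T₂) (hT : InternallyDisjoint G {u₁, u₂, u₃} T₁ T₂)
    {a : β} {U : H.Subgraph} (hU : IsPendantSteinerTree H {a} U) :
    HasPendantTreesIn (G □ H) {(u₁, a), (u₂, a), (u₃, a)} 3 (subgraphBox (T₁ ⊔ T₂) U) := by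
  obtain ⟨a', ha'⟩ := hU.exists_adj (x := a) rfl
  have ha : a ∈ U.verts := U.edge_vert ha'
  have haa' : a ≠ a' := ha'.ne
  obtain ⟨Q, hQ, hQU, -⟩ := hU.exists_isPath (U.edge_vert ha'.symm) ha
  have hS : ({u₁, u₂, u₃} : Set α) ×ˢ {a} = {(u₁, a), (u₂, a), (u₃, a)} := by
    ext ⟨x, k⟩; simp [or_and_right]
  set W₃ := layerComb T₁ a' u₁ u₂ u₃ Q Q Q
  have hW₃ : IsPendantSteinerTree (G □ H) {(u₁, a), (u₂, a), (u₃, a)} W₃ :=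
    isPendantSteinerTree_layerComb hT₁ h12 h13 h23 hQ hQ hQ
  have hW₃W {T : G.Subgraph} (hT : IsPendantSteinerTree G {u₁, u₂, u₃} T) :
      InternallyDisjoint (G □ H) {(u₁, a), (u₂, a), (u₃, a)} (layerCopy H T a) W₃ := by
    refine internallyDisjoint_of_subset (hS ▸ (hT.layerCopy a).2.1) hW₃.2.1
      (by simp [W₃, layerComb, haa']) ?_
    rintro ⟨x, k⟩ ⟨h₁, h₂⟩
    simp only [W₃, mem_verts_layerComb, verts_layerCopy, Set.mem_prod,
      Set.mem_singleton_iff] at h₁ h₂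
    simp only [Set.mem_insert_iff, Set.mem_singleton_iff, Prod.mk.injEq]
    grind
  refine hasPendantTreesIn_three ⟨?_, ?_, ?_⟩ (hS ▸ hT₁.layerCopy a) (hS ▸ hT₂.layerCopy a) hW₃
    ?_ (hW₃W hT₁) (hW₃W hT₂)
  · exact layerCopy_le_subgraphBox le_sup_left ha
  · exact layerCopy_le_subgraphBox le_sup_right ha
  · exact layerComb_le_subgraphBox le_sup_left hT₁.2.1 hQU hQU hQU
  · have hE : Disjoint T₁.edgeSet T₂.edgeSet := Set.disjoint_iff_inter_eq_empty.mpr hT.1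
    refine internallyDisjoint_of_subset (hS ▸ (hT₁.layerCopy a).2.1)
      (hS ▸ (hT₂.layerCopy a).2.1) (by simp [hE]) ?_
    rintro ⟨x, k⟩ ⟨h₁, h₂⟩
    simp only [verts_layerCopy, Set.mem_prod, Set.mem_singleton_iff] at h₁ h₂
    have hx := hT.2 ▸ Set.mem_inter h₁.1 h₂.1
    simp only [Set.mem_insert_iff, Set.mem_singleton_iff] at hx
    simp only [Set.mem_insert_iff, Set.mem_singleton_iff, Prod.mk.injEq, h₁.2, and_true, hx]

theorem hasPendantTreesIn_of_pair_of_mem {v₁ v₂ v₃ : α} (h12 : v₁ ≠ v₂) (h13 : v₁ ≠ v₃)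
    (h23 : v₂ ≠ v₃) {p q : β} (hpq : p ≠ q) {T₁ T₂ : G.Subgraph}
    (hT₁ : IsPendantSteinerTree G {v₁, v₂, v₃} T₁) (hT₂ : IsPendantSteinerTree G {v₁, v₂, v₃} T₂)
    (hT : InternallyDisjoint G {v₁, v₂, v₃} T₁ T₂) {U₁ U₂ : H.Subgraph}
    (hU₁ : IsPendantSteinerTree H {p, q} U₁) (hU₂ : IsPendantSteinerTree H {p, q} U₂)
    (hU : InternallyDisjoint H {p, q} U₁ U₂) {d : β} (hd : d ∈ U₂.verts) (hdp : d ≠ p)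
    (hdq : d ≠ q) :
    HasPendantTreesIn (G □ H) {(v₁, p), (v₂, p), (v₃, q)} 3 (subgraphBox (T₁ ⊔ T₂) (U₁ ⊔ U₂)) := by
  obtain ⟨hv₁, hv₂, hv₃⟩ : v₁ ∈ T₂.verts ∧ v₂ ∈ T₂.verts ∧ v₃ ∈ T₂.verts := by
    simpa [Set.insert_subset_iff] using hT₂.2.1
  obtain ⟨hp, hq⟩ : p ∈ U₁.verts ∧ q ∈ U₁.verts := by simpa [Set.insert_subset_iff] using hU₁.2.1
  obtain ⟨hp', hq'⟩ : p ∈ U₂.verts ∧ q ∈ U₂.verts := by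
    simpa [Set.insert_subset_iff] using hU₂.2.1
  obtain ⟨R, hR, hRU, -⟩ := hU₁.exists_isPath hp hq
  obtain ⟨Qp, hQp, hQpU, hQpS⟩ := hU₂.exists_isPath hd hp'
  obtain ⟨Qq, hQq, hQqU, hQqS⟩ := hU₂.exists_isPath hd hq'
  obtain ⟨P, hP, hPT, hPS⟩ := hT₂.exists_isPath hv₁ hv₂
  have hPw : P.toSubgraph.Adj v₁ P.snd := P.toSubgraph_adj_snd (P.not_nil_of_ne h12)
  obtain ⟨hw₁, hw₂, hw₃⟩ : P.snd ≠ v₁ ∧ P.snd ≠ v₂ ∧ P.snd ≠ v₃ := by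
    simpa using hT₂.snd_notMem h12 h13 h23 hP hPT
  set w := P.snd
  have hwP : w ∈ P.support := P.mem_verts_toSubgraph.mp hPw.snd_mem
  have hwT₂ : w ∈ T₂.verts := hPT.1 (P.mem_verts_toSubgraph.mpr hwP)
  obtain ⟨P', hP', hP'T, -⟩ := hT₂.exists_isPath hwT₂ hv₃
  set W₁ := layerComb T₁ p v₁ v₂ v₃ (Walk.nil : H.Walk p p) Walk.nil R
  set W₂ := layerComb T₂ d v₁ v₂ v₃ Qp Qp Qq
  set W₃ := layerCopy H P.toSubgraph p ⊔ fiberCopy G w R.toSubgraph ⊔ layerCopy H P'.toSubgraph q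
  have hW₁ : IsPendantSteinerTree (G □ H) {(v₁, p), (v₂, p), (v₃, q)} W₁ :=
    isPendantSteinerTree_layerComb hT₁ h12 h13 h23 Walk.IsPath.nil Walk.IsPath.nil hR
  have hW₂ : IsPendantSteinerTree (G □ H) {(v₁, p), (v₂, p), (v₃, q)} W₂ :=
    isPendantSteinerTree_layerComb hT₂ h12 h13 h23 hQp hQp hQq
  have hW₃ : IsPendantSteinerTree (G □ H) {(v₁, p), (v₂, p), (v₃, q)} W₃ :=
    isPendantSteinerTree_layerCopy_sup_fiberCopy_sup_layerCopy h12 hP hP' hwP hw₁ hw₂ hw₃ hpq hR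
  have hW₁T : W₁ ≤ subgraphBox T₁ U₁ :=
    layerComb_le_subgraphBox le_rfl hT₁.2.1 (by simpa using hp) (by simpa using hp) hRU
  have hW₂T : W₂ ≤ subgraphBox T₂ U₂ := layerComb_le_subgraphBox le_rfl hT₂.2.1 hQpU hQpU hQqU
  have hW₂S : W₂.verts ∩ T₁.verts ×ˢ U₁.verts ⊆ {(v₁, p), (v₂, p), (v₃, q)} := by
    rintro ⟨x, k⟩ ⟨h₂, -, hk⟩
    simp only [W₂, mem_verts_layerComb] at h₂
    simp only [Set.mem_insert_iff, Set.mem_singleton_iff, Prod.mk.injEq]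
    grind [hU.2, hQpU.1, hQqU.1, Walk.mem_verts_toSubgraph]
  refine hasPendantTreesIn_three ⟨hW₁T.trans (subgraphBox_mono le_sup_left le_sup_left),
    hW₂T.trans (subgraphBox_mono le_sup_right le_sup_right), ?_⟩ hW₁ hW₂ hW₃
    (internallyDisjoint_of_le_subgraphBox (Set.disjoint_iff_inter_eq_empty.mpr hT.1)
      (Set.disjoint_iff_inter_eq_empty.mpr hU.1) hW₁T hW₂T hW₁.2.1 hW₂.2.1 hW₂S) ?_ ?_
  · exact (sup_le (sup_le (layerCopy_le_subgraphBox hPT hp) (fiberCopy_le_subgraphBox hRU hwT₂))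
      (layerCopy_le_subgraphBox hP'T hq)).trans (subgraphBox_mono le_sup_right le_sup_left)
  · have hE : Disjoint T₁.edgeSet P.edgeSet := by
      simpa using (Set.disjoint_iff_inter_eq_empty.mpr hT.1).mono le_rfl
        (Subgraph.edgeSet_mono hPT)
    refine internallyDisjoint_of_subset hW₁.2.1 hW₃.2.1
      (by simp [W₁, W₃, layerComb, hpq, hw₁.symm, hw₂.symm, hw₃.symm, hE]) ?_
    rintro ⟨x, k⟩ ⟨h₁, h₂⟩
    simp only [W₁, W₃, mem_verts_layerComb, Walk.support_nil, List.mem_singleton,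
      Subgraph.verts_sup, verts_layerCopy, verts_fiberCopy, Set.mem_union, Set.mem_prod,
      Set.mem_singleton_iff, Walk.mem_verts_toSubgraph] at h₁ h₂
    simp only [Set.mem_insert_iff, Set.mem_singleton_iff, Prod.mk.injEq]
    grind [hT.2, hPT.1, Walk.mem_verts_toSubgraph]
  · refine internallyDisjoint_of_subset hW₂.2.1 hW₃.2.1
      (by simp [W₂, W₃, layerComb, hdp, hdq, hw₁.symm, hw₂.symm, hw₃.symm]) ?_
    rintro ⟨x, k⟩ ⟨h₁, h₂⟩
    simp only [W₂, W₃, mem_verts_layerComb, Subgraph.verts_sup, verts_layerCopy,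
      verts_fiberCopy, Set.mem_union, Set.mem_prod, Set.mem_singleton_iff,
      Walk.mem_verts_toSubgraph] at h₁ h₂
    simp only [Set.mem_insert_iff, Set.mem_singleton_iff, Prod.mk.injEq]
    grind [hU.2, hRU.1, Walk.mem_verts_toSubgraph]

theorem hasPendantTreesIn_of_pair {v₁ v₂ v₃ : α} (h12 : v₁ ≠ v₂) (h13 : v₁ ≠ v₃)
    (h23 : v₂ ≠ v₃) {p q : β} (hpq : p ≠ q) {T₁ T₂ : G.Subgraph}
    (hT₁ : IsPendantSteinerTree G {v₁, v₂, v₃} T₁) (hT₂ : IsPendantSteinerTree G {v₁, v₂, v₃} T₂)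
    (hT : InternallyDisjoint G {v₁, v₂, v₃} T₁ T₂) {U₁ U₂ : H.Subgraph}
    (hU₁ : IsPendantSteinerTree H {p, q} U₁) (hU₂ : IsPendantSteinerTree H {p, q} U₂)
    (hU : InternallyDisjoint H {p, q} U₁ U₂) :
    HasPendantTreesIn (G □ H) {(v₁, p), (v₂, p), (v₃, q)} 3 (subgraphBox (T₁ ⊔ T₂) (U₁ ⊔ U₂)) := by
  -- the neighbour of `p` is not `q` in at least one of the edge-disjoint trees `U₁`, `U₂`
  obtain ⟨d₂, hd₂⟩ := hU₂.exists_adj (x := p) (by simp)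
  by_cases hd₂q : d₂ = q
  · obtain ⟨d₁, hd₁⟩ := hU₁.exists_adj (x := p) (by simp)
    have hd₁q : d₁ ≠ q := fun h =>
      (Set.eq_empty_iff_forall_notMem.mp hU.1) s(p, q) ⟨h ▸ hd₁, hd₂q ▸ hd₂⟩
    simpa only [sup_comm] using hasPendantTreesIn_of_pair_of_mem h12 h13 h23 hpq hT₁ hT₂ hT
      hU₂ hU₁ hU.symm (U₁.edge_vert hd₁.symm) hd₁.ne.symm hd₁q
  · exact hasPendantTreesIn_of_pair_of_mem h12 h13 h23 hpq hT₁ hT₂ hT hU₁ hU₂ hU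
      (U₂.edge_vert hd₂.symm) hd₂.ne.symm hd₂q

theorem hasPendantTreesIn_of_triple {u₁ u₂ u₃ : α} (h12 : u₁ ≠ u₂) (h13 : u₁ ≠ u₃)
    (h23 : u₂ ≠ u₃) {a b c : β} (hab : a ≠ b) (hac : a ≠ c) (hbc : b ≠ c) {T₁ T₂ : G.Subgraph}
    (hT₁ : IsPendantSteinerTree G {u₁, u₂, u₃} T₁) (hT₂ : IsPendantSteinerTree G {u₁, u₂, u₃} T₂)
    (hT : InternallyDisjoint G {u₁, u₂, u₃} T₁ T₂) {U₁ U₂ : H.Subgraph}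
    (hU₁ : IsPendantSteinerTree H {a, b, c} U₁) (hU₂ : IsPendantSteinerTree H {a, b, c} U₂)
    (hU : InternallyDisjoint H {a, b, c} U₁ U₂) :
    HasPendantTreesIn (G □ H) {(u₁, a), (u₂, b), (u₃, c)} 3 (subgraphBox (T₁ ⊔ T₂) (U₁ ⊔ U₂)) := by
  obtain ⟨hu₁, hu₂, hu₃⟩ : u₁ ∈ T₁.verts ∧ u₂ ∈ T₁.verts ∧ u₃ ∈ T₁.verts := by
    simpa [Set.insert_subset_iff] using hT₁.2.1
  obtain ⟨ha, hb, hc⟩ : a ∈ U₁.verts ∧ b ∈ U₁.verts ∧ c ∈ U₁.verts := by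
    simpa [Set.insert_subset_iff] using hU₁.2.1
  obtain ⟨ha', hb', hc'⟩ : a ∈ U₂.verts ∧ b ∈ U₂.verts ∧ c ∈ U₂.verts := by
    simpa [Set.insert_subset_iff] using hU₂.2.1
  -- a vertex of `U₂` that is not a terminal, hence not in `U₁`
  obtain ⟨Q, hQ, hQU, -⟩ := hU₂.exists_isPath ha' hb'
  obtain ⟨hda, hdb, hdc⟩ : Q.snd ≠ a ∧ Q.snd ≠ b ∧ Q.snd ≠ c := by
    simpa using hU₂.snd_notMem hab hac hbc hQ hQU
  set d := Q.snd
  have hd : d ∈ U₂.verts := hQU.1 (Q.toSubgraph_adj_snd (Q.not_nil_of_ne hab)).snd_mem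
  -- the intersection checks below rest on the paths avoiding the other terminals (`h·S`)
  obtain ⟨Pab, hPab, hPabU, hPabS⟩ := hU₁.exists_isPath ha hb
  obtain ⟨Pac, hPac, hPacU, hPacS⟩ := hU₁.exists_isPath ha hc
  obtain ⟨P₁₂, hP₁₂, hP₁₂T, hP₁₂S⟩ := hT₁.exists_isPath hu₁ hu₂
  obtain ⟨P₁₃, hP₁₃, hP₁₃T, hP₁₃S⟩ := hT₁.exists_isPath hu₁ hu₃
  obtain ⟨Qa, hQa, hQaU, hQaS⟩ := hU₂.exists_isPath hd ha'
  obtain ⟨Qb, hQb, hQbU, hQbS⟩ := hU₂.exists_isPath hd hb'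
  obtain ⟨Qc, hQc, hQcU, hQcS⟩ := hU₂.exists_isPath hd hc'
  set W₁ := layerComb T₁ a u₁ u₂ u₃ (Walk.nil : H.Walk a a) Pab Pac
  set W₂ := fiberComb U₁ u₁ a b c (Walk.nil : G.Walk u₁ u₁) P₁₂ P₁₃
  set W₃ := layerComb T₂ d u₁ u₂ u₃ Qa Qb Qc
  have hW₁ : IsPendantSteinerTree (G □ H) {(u₁, a), (u₂, b), (u₃, c)} W₁ :=
    isPendantSteinerTree_layerComb hT₁ h12 h13 h23 Walk.IsPath.nil hPab hPac
  have hW₂ : IsPendantSteinerTree (G □ H) {(u₁, a), (u₂, b), (u₃, c)} W₂ :=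
    isPendantSteinerTree_fiberComb hU₁ hab hac hbc Walk.IsPath.nil hP₁₂ hP₁₃
  have hW₃ : IsPendantSteinerTree (G □ H) {(u₁, a), (u₂, b), (u₃, c)} W₃ :=
    isPendantSteinerTree_layerComb hT₂ h12 h13 h23 hQa hQb hQc
  have hW₁T : W₁ ≤ subgraphBox T₁ U₁ :=
    layerComb_le_subgraphBox le_rfl hT₁.2.1 (by simpa using ha) hPabU hPacU
  have hW₂T : W₂ ≤ subgraphBox T₁ U₁ :=
    fiberComb_le_subgraphBox le_rfl hU₁.2.1 (by simpa using hu₁) hP₁₂T hP₁₃T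
  have hW₃T : W₃ ≤ subgraphBox T₂ U₂ := layerComb_le_subgraphBox le_rfl hT₂.2.1 hQaU hQbU hQcU
  -- `W₃` meets `T₁ □ U₁`, which contains `W₁` and `W₂`, only in the terminals
  have hW₃S : W₃.verts ∩ T₁.verts ×ˢ U₁.verts ⊆ {(u₁, a), (u₂, b), (u₃, c)} := by
    rintro ⟨x, k⟩ ⟨h₃, -, hk⟩
    simp only [W₃, mem_verts_layerComb] at h₃
    simp only [Set.mem_insert_iff, Set.mem_singleton_iff, Prod.mk.injEq]
    grind [hU.2, hQaU.1, hQbU.1, hQcU.1, Walk.mem_verts_toSubgraph]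
  have hTT : Disjoint T₁.edgeSet T₂.edgeSet := Set.disjoint_iff_inter_eq_empty.mpr hT.1
  have hUU : Disjoint U₁.edgeSet U₂.edgeSet := Set.disjoint_iff_inter_eq_empty.mpr hU.1
  have hbox : subgraphBox T₁ U₁ ≤ subgraphBox (T₁ ⊔ T₂) (U₁ ⊔ U₂) :=
    subgraphBox_mono le_sup_left le_sup_left
  refine hasPendantTreesIn_three ⟨hW₁T.trans hbox, hW₂T.trans hbox,
    hW₃T.trans (subgraphBox_mono le_sup_right le_sup_right)⟩ hW₁ hW₂ hW₃ ?_
    (internallyDisjoint_of_le_subgraphBox hTT hUU hW₁T hW₃T hW₁.2.1 hW₃.2.1 hW₃S)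
    (internallyDisjoint_of_le_subgraphBox hTT hUU hW₂T hW₃T hW₂.2.1 hW₃.2.1 hW₃S)
  refine internallyDisjoint_of_subset hW₁.2.1 hW₂.2.1
    (by simp [W₁, W₂, layerComb, fiberComb, hab, hac, h12.symm, h13.symm]) ?_
  rintro ⟨x, k⟩ ⟨h₁, h₂⟩
  simp only [W₁, W₂, mem_verts_layerComb, mem_verts_fiberComb, Walk.support_nil,
    List.mem_singleton] at h₁ h₂
  simp only [Set.mem_insert_iff, Set.mem_singleton_iff, Prod.mk.injEq]
  grind

end Cases

theorem stmt19_general {α V : Type*} (G : SimpleGraph α) (H : SimpleGraph V)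
    (u₁ u₂ u₃ : α) (h12 : u₁ ≠ u₂) (h13 : u₁ ≠ u₃) (h23 : u₂ ≠ u₃)
    (a b c : V)
    (T₁ T₂ : G.Subgraph)
    (hT₁ : IsPendantSteinerTree G {u₁, u₂, u₃} T₁)
    (hT₂ : IsPendantSteinerTree G {u₁, u₂, u₃} T₂)
    (hdisj : InternallyDisjoint G {u₁, u₂, u₃} T₁ T₂)
    (T₁' T₂' : H.Subgraph)
    (hT₁' : IsPendantSteinerTree H {a, b, c} T₁')
    (hT₂' : IsPendantSteinerTree H {a, b, c} T₂')
    (hdisj' : InternallyDisjoint H {a, b, c} T₁' T₂') :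
    ∃ W : Fin 3 → (G □ H).Subgraph,
      (∀ i, W i ≤ subgraphBox (T₁ ⊔ T₂) (T₁' ⊔ T₂')) ∧
      (∀ i, IsPendantSteinerTree (G □ H) {(u₁, a), (u₂, b), (u₃, c)} (W i)) ∧
      ∀ i j, i ≠ j →
        InternallyDisjoint (G □ H) {(u₁, a), (u₂, b), (u₃, c)} (W i) (W j) := by
  change HasPendantTreesIn (G □ H) {(u₁, a), (u₂, b), (u₃, c)} 3 (subgraphBox (T₁ ⊔ T₂) (T₁' ⊔ T₂'))
  rcases eq_or_ne a b with rfl | hab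
  · rcases eq_or_ne a c with rfl | hac
    · exact (hasPendantTreesIn_of_singleton h12 h13 h23 hT₁ hT₂ hdisj (by simpa using hT₁')).mono
        (subgraphBox_mono le_rfl le_sup_left)
    · simp only [Set.insert_eq_of_mem, Set.mem_insert_iff, true_or] at hT₁' hT₂' hdisj'
      exact hasPendantTreesIn_of_pair h12 h13 h23 hac hT₁ hT₂ hdisj hT₁' hT₂' hdisj'
  rcases eq_or_ne a c with rfl | hac
  · have hS : ({a, b, a} : Set V) = {a, b} := by ext; simp [or_comm]
    rw [hS] at hT₁' hT₂' hdisj'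
    rw [Set.pair_comm u₂ u₃] at hT₁ hT₂ hdisj
    rw [Set.pair_comm (u₂, b)]
    exact hasPendantTreesIn_of_pair h13 h12 h23.symm hab hT₁ hT₂ hdisj hT₁' hT₂' hdisj'
  rcases eq_or_ne b c with rfl | hbc
  · have hS : ({a, b, b} : Set V) = {b, a} := by ext; simp [or_comm]
    rw [hS] at hT₁' hT₂' hdisj'
    rw [Set.insert_comm u₁ u₂, Set.pair_comm u₁ u₃] at hT₁ hT₂ hdisj
    rw [Set.insert_comm (u₁, a), Set.pair_comm (u₁, a)]
    exact hasPendantTreesIn_of_pair h23 h12.symm h13.symm hab.symm hT₁ hT₂ hdisj hT₁' hT₂' hdisj'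
  exact hasPendantTreesIn_of_triple h12 h13 h23 hab hac hbc hT₁ hT₂ hdisj hT₁' hT₂' hdisj'

theorem stmt19 {α V : Type*} (G : SimpleGraph α) (H : SimpleGraph V)
    (u₁ u₂ u₃ : α) (h12 : u₁ ≠ u₂) (h13 : u₁ ≠ u₃) (h23 : u₂ ≠ u₃)
    (a b c : V)
    (T₁ T₂ : G.Subgraph)
    (hT₁ : IsPendantSteinerTree G {u₁, u₂, u₃} T₁)
    (hT₂ : IsPendantSteinerTree G {u₁, u₂, u₃} T₂)
    (hmin₁ : ∀ T' : G.Subgraph, IsPendantSteinerTree G {u₁, u₂, u₃} T' →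
      T₁.edgeSet.ncard ≤ T'.edgeSet.ncard)
    (hmin₂ : ∀ T' : G.Subgraph, IsPendantSteinerTree G {u₁, u₂, u₃} T' →
      T₂.edgeSet.ncard ≤ T'.edgeSet.ncard)
    (hdisj : InternallyDisjoint G {u₁, u₂, u₃} T₁ T₂)
    (T₁' T₂' : H.Subgraph)
    (hT₁' : IsPendantSteinerTree H {a, b, c} T₁')
    (hT₂' : IsPendantSteinerTree H {a, b, c} T₂')
    (hdisj' : InternallyDisjoint H {a, b, c} T₁' T₂') :
    ∃ W : Fin 3 → (G □ H).Subgraph,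
      (∀ i, W i ≤ subgraphBox (T₁ ⊔ T₂) (T₁' ⊔ T₂')) ∧
      (∀ i, IsPendantSteinerTree (G □ H) {(u₁, a), (u₂, b), (u₃, c)} (W i)) ∧
      ∀ i j, i ≠ j →
        InternallyDisjoint (G □ H) {(u₁, a), (u₂, b), (u₃, c)} (W i) (W j) :=
  stmt19_general G H u₁ u₂ u₃ h12 h13 h23 a b c T₁ T₂ hT₁ hT₂ hdisj T₁' T₂' hT₁' hT₂' hdisj'
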